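/- Fix k ∈ ℝ and define on {(r,s) ∈ ℝ² : 0 < s < r} the function φ̄(r,s) := r^{2(k²+1)}·(r² − s²)·exp( 2k·arctan( k − (1 + k²)s/√(r² − s²) ) ) / ( k²s² − 2ks√(r² − s²) + r² ). (Note the denominator equals (ks − √(r² − s²))² + s² > 0.) Then φ̄ satisfies the transport equation s·φ̄_r(r,s) + [ 1 − ((r² − s²)/r⁴)·( (r² − s²) − (ks − √(r² − s²))² ) ]·r·φ̄_s(r,s) = 0 at every point of {0 < s < r}. -/

import Mathlib

/-- Partial derivative with respect to the first variable `r`. -/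
noncomputable def pderivR (f : ℝ → ℝ → ℝ) (r s : ℝ) : ℝ := deriv (fun t => f t s) r

/-- Partial derivative with respect to the second variable `s`. -/
noncomputable def pderivS (f : ℝ → ℝ → ℝ) (r s : ℝ) : ℝ := deriv (fun t => f r t) s

/-- `φ̄(r,s) := r^{2(k²+1)}·(r² − s²)·exp(2k·arctan(k − (1 + k²)s/√(r² − s²)))
/ (k²s² − 2ks√(r² − s²) + r²)`. -/
noncomputable def phibar (k r s : ℝ) : ℝ :=
  r ^ ((2 * (k ^ 2 + 1) : ℝ)) * (r ^ 2 - s ^ 2) *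
    Real.exp (2 * k * Real.arctan (k - (1 + k ^ 2) * s / Real.sqrt (r ^ 2 - s ^ 2))) /
    (k ^ 2 * s ^ 2 - 2 * k * s * Real.sqrt (r ^ 2 - s ^ 2) + r ^ 2)

/-! On `0 < s < r` write `w = √(r² − s²)` and `D = k²s² − 2ksw + r² = (ks − w)² + s² > 0`.
Each partial derivative of `φ̄` is `φ̄` times the sum of the logarithmic derivatives of its
factors. The arctangent argument `u = k − (1 + k²)s/w` satisfies `1 + u² = (1 + k²)D/w²`, so
the arctangent contributes the rational terms `sr/(wD)` and `−r²/(wD)`. Both logarithmic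
derivatives are then rational in `r, s, w`, and the transport equation becomes a rational
identity modulo `w² = r² − s²`. -/

open Real

theorem HasDerivAt.mul_mul_exp_div {f g e h : ℝ → ℝ} {f' g' e' h' x : ℝ}
    (hf : HasDerivAt f f' x) (hg : HasDerivAt g g' x) (he : HasDerivAt e e' x)
    (hh : HasDerivAt h h' x) (hf0 : f x ≠ 0) (hg0 : g x ≠ 0) (hh0 : h x ≠ 0) :
    HasDerivAt (fun t => f t * g t * Real.exp (e t) / h t)
      (f x * g x * Real.exp (e x) / h x * (f' / f x + g' / g x + e' - h' / h x)) x := by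
  refine (((hf.mul hg).mul he.exp).div hh hh0).congr_deriv ?_
  simp only [Pi.mul_apply]
  field_simp

section

variable {k r s : ℝ}

theorem hasDerivAt_sqrt_sq_sub_left (hsr : s ^ 2 < r ^ 2) :
    HasDerivAt (fun t => √(t ^ 2 - s ^ 2)) (r / √(r ^ 2 - s ^ 2)) r := by
  convert ((hasDerivAt_pow 2 r).sub_const (s ^ 2)).sqrt (sub_pos.2 hsr).ne' using 1
  field_simp
  ring

theorem hasDerivAt_sqrt_sq_sub_right (hsr : s ^ 2 < r ^ 2) :
    HasDerivAt (fun t => √(r ^ 2 - t ^ 2)) (-s / √(r ^ 2 - s ^ 2)) s := by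
  convert ((hasDerivAt_pow 2 s).const_sub (r ^ 2)).sqrt (sub_pos.2 hsr).ne' using 1
  field_simp
  ring

theorem sq_sqrt_sq_sub_add_sq (hsr : s ^ 2 ≤ r ^ 2) : √(r ^ 2 - s ^ 2) ^ 2 + s ^ 2 = r ^ 2 := by
  rw [sq_sqrt (sub_nonneg.2 hsr), sub_add_cancel]

theorem phibar_denom_eq (hsr : s ^ 2 ≤ r ^ 2) :
    k ^ 2 * s ^ 2 - 2 * k * s * √(r ^ 2 - s ^ 2) + r ^ 2
      = (k * s - √(r ^ 2 - s ^ 2)) ^ 2 + s ^ 2 := by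
  linear_combination -sq_sqrt_sq_sub_add_sq hsr

theorem phibar_denom_pos (hs : s ≠ 0) (hsr : s ^ 2 ≤ r ^ 2) :
    0 < k ^ 2 * s ^ 2 - 2 * k * s * √(r ^ 2 - s ^ 2) + r ^ 2 := by
  rw [phibar_denom_eq hsr]
  positivity

theorem one_add_sq_arctan_arg {w : ℝ} (hw : w ≠ 0) (hrw : w ^ 2 + s ^ 2 = r ^ 2) :
    1 + (k - (1 + k ^ 2) * s / w) ^ 2
      = (1 + k ^ 2) * (k ^ 2 * s ^ 2 - 2 * k * s * w + r ^ 2) / w ^ 2 := by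
  field_simp
  linear_combination (1 + k ^ 2) * hrw

theorem hasDerivAt_arctan_arg_left (hsr : s ^ 2 < r ^ 2) :
    HasDerivAt (fun t => arctan (k - (1 + k ^ 2) * s / √(t ^ 2 - s ^ 2)))
      (s * r / (√(r ^ 2 - s ^ 2) * (k ^ 2 * s ^ 2 - 2 * k * s * √(r ^ 2 - s ^ 2) + r ^ 2))) r := by
  have hw0 := (sqrt_pos.2 (sub_pos.2 hsr)).ne'
  have hrw := sq_sqrt_sq_sub_add_sq hsr.le
  refine (((hasDerivAt_const r k).sub ((hasDerivAt_const r ((1 + k ^ 2) * s)).div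
    (hasDerivAt_sqrt_sq_sub_left hsr) hw0)).arctan).congr_deriv ?_
  simp only [Pi.sub_apply, Pi.div_apply]
  rw [one_add_sq_arctan_arg hw0 hrw]
  field_simp
  ring

theorem hasDerivAt_arctan_arg_right (hsr : s ^ 2 < r ^ 2) :
    HasDerivAt (fun t => arctan (k - (1 + k ^ 2) * t / √(r ^ 2 - t ^ 2)))
      (-r ^ 2 / (√(r ^ 2 - s ^ 2) * (k ^ 2 * s ^ 2 - 2 * k * s * √(r ^ 2 - s ^ 2) + r ^ 2))) s := by
  have hw0 := (sqrt_pos.2 (sub_pos.2 hsr)).ne'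
  have hrw := sq_sqrt_sq_sub_add_sq hsr.le
  refine (((hasDerivAt_const s k).sub (((hasDerivAt_id' s).const_mul (1 + k ^ 2)).div
    (hasDerivAt_sqrt_sq_sub_right hsr) hw0)).arctan).congr_deriv ?_
  simp only [Pi.sub_apply, Pi.div_apply]
  rw [one_add_sq_arctan_arg hw0 hrw]
  generalize √(r ^ 2 - s ^ 2) = w at *
  rw [← hrw]
  field_simp
  ring

theorem hasDerivAt_phibar_left (hr : 0 < r) (hs : s ≠ 0) (hsr : s ^ 2 < r ^ 2) :
    HasDerivAt (fun t => phibar k t s)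
      (phibar k r s * (2 * (k ^ 2 + 1) / r + 2 * r / (r ^ 2 - s ^ 2)
        + 2 * r * (2 * k * s - √(r ^ 2 - s ^ 2)) /
          (√(r ^ 2 - s ^ 2) * (k ^ 2 * s ^ 2 - 2 * k * s * √(r ^ 2 - s ^ 2) + r ^ 2)))) r := by
  have hw0 := (sqrt_pos.2 (sub_pos.2 hsr)).ne'
  have hD := (phibar_denom_pos (k := k) hs hsr.le).ne'
  refine (HasDerivAt.mul_mul_exp_div (hasDerivAt_rpow_const (p := 2 * (k ^ 2 + 1)) (.inl hr.ne'))
    ((hasDerivAt_pow 2 r).sub_const (s ^ 2)) ((hasDerivAt_arctan_arg_left hsr).const_mul (2 * k))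
    (((hasDerivAt_sqrt_sq_sub_left hsr).const_mul (2 * k * s)).const_sub (k ^ 2 * s ^ 2)
      |>.add (hasDerivAt_pow 2 r)) (rpow_pos_of_pos hr _).ne' (sub_pos.2 hsr).ne' hD).congr_deriv ?_
  rw [rpow_sub_one hr.ne']
  unfold phibar
  congr 1
  simp only [Pi.add_apply]
  field_simp
  ring

theorem hasDerivAt_phibar_right (hr : 0 < r) (hs : s ≠ 0) (hsr : s ^ 2 < r ^ 2) :
    HasDerivAt (fun t => phibar k r t)
      (phibar k r s * (-2 * s / (r ^ 2 - s ^ 2)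
        - 2 * k * s * (2 * s + k * √(r ^ 2 - s ^ 2)) /
          (√(r ^ 2 - s ^ 2) * (k ^ 2 * s ^ 2 - 2 * k * s * √(r ^ 2 - s ^ 2) + r ^ 2)))) s := by
  have hw0 := (sqrt_pos.2 (sub_pos.2 hsr)).ne'
  have hrw := sq_sqrt_sq_sub_add_sq hsr.le
  have hD := (phibar_denom_pos (k := k) hs hsr.le).ne'
  refine (HasDerivAt.mul_mul_exp_div (hasDerivAt_const s (r ^ (2 * (k ^ 2 + 1))))
    ((hasDerivAt_pow 2 s).const_sub (r ^ 2)) ((hasDerivAt_arctan_arg_right hsr).const_mul (2 * k))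
    ((((hasDerivAt_pow 2 s).const_mul (k ^ 2)).sub
      (((hasDerivAt_id' s).const_mul (2 * k)).mul (hasDerivAt_sqrt_sq_sub_right hsr))).add_const (r ^ 2))
    (rpow_pos_of_pos hr _).ne' (sub_pos.2 hsr).ne' hD).congr_deriv ?_
  unfold phibar
  congr 1
  simp only [Pi.sub_apply, Pi.mul_apply]
  generalize √(r ^ 2 - s ^ 2) = w at *
  rw [← hrw]
  field_simp
  ring

theorem phibar_transport_logDeriv {w : ℝ} (hr : r ≠ 0) (hw : w ≠ 0)
    (hD : k ^ 2 * s ^ 2 - 2 * k * s * w + r ^ 2 ≠ 0) (hw2 : w ^ 2 = r ^ 2 - s ^ 2) :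
    s * (2 * (k ^ 2 + 1) / r + 2 * r / (r ^ 2 - s ^ 2)
        + 2 * r * (2 * k * s - w) / (w * (k ^ 2 * s ^ 2 - 2 * k * s * w + r ^ 2)))
      + (1 - ((r ^ 2 - s ^ 2) / r ^ 4) * ((r ^ 2 - s ^ 2) - (k * s - w) ^ 2)) * r *
        (-2 * s / (r ^ 2 - s ^ 2)
          - 2 * k * s * (2 * s + k * w) / (w * (k ^ 2 * s ^ 2 - 2 * k * s * w + r ^ 2))) = 0 := by
  rw [← hw2]
  field_simp
  grind

end

/-- `φ̄` satisfies the transport equation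
`s·φ̄_r + [1 − ((r² − s²)/r⁴)·((r² − s²) − (ks − √(r² − s²))²)]·r·φ̄_s = 0`
on `{0 < s < r}`. -/
theorem stmt_5 (k : ℝ) :
    ∀ r s : ℝ, 0 < s → s < r →
      s * pderivR (phibar k) r s
        + (1 - ((r ^ 2 - s ^ 2) / r ^ 4) *
            ((r ^ 2 - s ^ 2) - (k * s - Real.sqrt (r ^ 2 - s ^ 2)) ^ 2)) * r *
          pderivS (phibar k) r s = 0 := by
  intro r s hs hsr
  have hr : 0 < r := hs.trans hsr
  have hsr2 : s ^ 2 < r ^ 2 := by gcongr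
  rw [pderivR, pderivS, (hasDerivAt_phibar_left hr hs.ne' hsr2).deriv,
    (hasDerivAt_phibar_right hr hs.ne' hsr2).deriv]
  linear_combination phibar k r s * phibar_transport_logDeriv (k := k) hr.ne'
    (sqrt_pos.2 (sub_pos.2 hsr2)).ne' (phibar_denom_pos hs.ne' hsr2.le).ne'
    (sq_sqrt (sub_pos.2 hsr2).le)
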